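/- arXiv:2107.09958 — 6 statements merged into one kernel-verified Lean document; each statement's English description precedes it below -/
import Mathlib

section
/- The function φ(t) = -t + √(1+t²) + log t - log(1+√(1+t²)) is strictly negative for all t > 0. -/
/-- The function `φ(t) = -t + √(1+t²) + log t - log(1+√(1+t²))` is strictly
negative for all `t > 0`. -/
theorem phi_strictly_negative :
    ∀ t : ℝ, 0 < t →
      -t + Real.sqrt (1 + t ^ 2) + Real.log t
        - Real.log (1 + Real.sqrt (1 + t ^ 2)) < 0 := by
  intro t ht
  set s := Real.sqrt (1 + t ^ 2) with hs
  have hs2 : s ^ 2 = 1 + t ^ 2 := Real.sq_sqrt (by positivity)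
  have hs0 : 0 < s := Real.sqrt_pos.mpr (by positivity)
  have hts : t < s := by nlinarith
  have hlog : Real.log (t / (1 + s)) ≤ t / (1 + s) - 1 :=
    Real.log_le_sub_one_of_pos (by positivity)
  rw [Real.log_div (ne_of_gt ht) (by positivity)] at hlog
  have h1 : t / (1 + s) < 1 + t - s := by
    rw [div_lt_iff₀ (by positivity)]
    nlinarith
  linarith
end

section
/- The function φ(t) = -t + √(1+t²) + log t - log(1+√(1+t²)) is monotonically increasing on (0,∞). -/
/-!
On `(0, ∞)` the derivative of `φ` simplifies, using `√(1+t²)² = 1+t²`, to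
`φ'(t) = (√(1+t²) - t) / t`, which is positive because `t < √(1+t²)`; so `φ` is even
strictly increasing there.
-/

open Real Set

lemma Real.hasDerivAt_sqrt_one_add_sq (t : ℝ) :
    HasDerivAt (fun t : ℝ => √(1 + t ^ 2)) (t / √(1 + t ^ 2)) t := by
  have hpos : (0 : ℝ) < 1 + t ^ 2 := by positivity
  convert ((hasDerivAt_pow 2 t).const_add 1).sqrt hpos.ne' using 1
  field_simp
  ring

lemma Real.lt_sqrt_one_add_sq (t : ℝ) : t < √(1 + t ^ 2) :=
  (le_abs_self t).trans_lt <| by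
    rw [← sqrt_sq_eq_abs]
    exact sqrt_lt_sqrt (sq_nonneg t) (lt_one_add _)

noncomputable def phi (t : ℝ) : ℝ :=
  -t + √(1 + t ^ 2) + log t - log (1 + √(1 + t ^ 2))

lemma hasDerivAt_phi {t : ℝ} (ht : 0 < t) :
    HasDerivAt phi ((√(1 + t ^ 2) - t) / t) t := by
  have hsqrt := hasDerivAt_sqrt_one_add_sq t
  have hlog := (hsqrt.const_add 1).log (by positivity)
  refine ((((hasDerivAt_id' t).neg.add hsqrt).add (hasDerivAt_log ht.ne')).sub hlog).congr_deriv ?_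
  have hs_sq : √(1 + t ^ 2) ^ 2 = 1 + t ^ 2 := sq_sqrt (by positivity)
  field_simp
  linear_combination -√(1 + t ^ 2) * hs_sq

lemma strictMonoOn_phi : StrictMonoOn phi (Ioi 0) := by
  refine strictMonoOn_of_hasDerivWithinAt_pos (f' := fun t => (√(1 + t ^ 2) - t) / t)
    (convex_Ioi 0) (fun t ht => (hasDerivAt_phi ht).continuousAt.continuousWithinAt) ?_ ?_
    <;> rw [interior_Ioi]
  · exact fun t ht => (hasDerivAt_phi ht).hasDerivWithinAt
  · exact fun t ht => div_pos (sub_pos.mpr (lt_sqrt_one_add_sq t)) ht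

/-- The function `φ(t) = -t + √(1+t²) + log t - log(1+√(1+t²))` is monotonically
increasing on `(0, ∞)`. -/
theorem phi_monotone :
    MonotoneOn
      (fun t : ℝ =>
        -t + Real.sqrt (1 + t ^ 2) + Real.log t
          - Real.log (1 + Real.sqrt (1 + t ^ 2)))
      (Set.Ioi (0 : ℝ)) :=
  strictMonoOn_phi.monotoneOn
end

section
/- For every t > 0, φ(t) ≤ 1/(2t) - log(1 + 1/t), where φ(t) = -t + √(1+t²) + log t - log(1+√(1+t²)). -/
/-- For every `t > 0`, `φ(t) ≤ 1/(2t) - log(1 + 1/t)`, where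
`φ(t) = -t + √(1+t²) + log t - log(1+√(1+t²))`. -/
theorem phi_upper_bound :
    ∀ t : ℝ, 0 < t →
      -t + Real.sqrt (1 + t ^ 2) + Real.log t
        - Real.log (1 + Real.sqrt (1 + t ^ 2))
        ≤ 1 / (2 * t) - Real.log (1 + 1 / t) := by
  intro t ht
  set s := Real.sqrt (1 + t ^ 2) with hs
  have hs2 : s ^ 2 = 1 + t ^ 2 := Real.sq_sqrt (by positivity)
  have hs0 : 0 ≤ s := Real.sqrt_nonneg _
  have hts : t ≤ s := by nlinarith
  have h1 : Real.log (1 + 1 / t) = Real.log (1 + t) - Real.log t := by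
    rw [show (1 : ℝ) + 1 / t = (1 + t) / t by field_simp; ring,
      Real.log_div (by positivity) (by positivity)]
  have h2 : s - t ≤ 1 / (2 * t) := by
    rw [le_div_iff₀ (by positivity : (0:ℝ) < 2 * t)]
    nlinarith
  have h3 : Real.log (1 + t) ≤ Real.log (1 + s) :=
    Real.log_le_log (by positivity) (by linarith)
  rw [h1]
  linarith
end

section
/- There exists a constant C > 0 such that for all natural numbers n and all t > 0, s_n(t) ≤ C/(n+1)², where s_n(t) = (n+1) · e^{-t} e^{√((n+1)²+t²)} · (t/(n+1+√((n+1)²+t²)))^{n+1} / (t · (1+(n+1)²+t²)^{1/4}). -/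
/-!
Write `m = n + 1` and `r = √(m² + t²)`, so that `e^{r-t} (t/(m+r))^m` is the `m`-th power of
`e^{(r-t)/m} · t/(m+r)`. Each factor is at most `1/(1 + m/(4t))`: for `r ≤ 3t` this follows from
`e^z ≤ 1/(1-z)` at `z = (r-t)/m < 1`, and for `r > 3t` from `r - t ≤ m` and `e < 3`.
It then suffices that `m³ ≤ 32 t Q (1 + m/(4t))^m` with `Q = (1 + m² + t²)^{1/4}`, where `Q ≥ 1` and
`Q² ≥ t`. For `t ≥ m²` already `m³ ≤ t Q`; for `t ≤ m²` we have `t ≤ Q m`, and the first- and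
second-order terms of the binomial expansion of `(1 + m/(4t))^m` contribute `8 Q m²` and at least
`m²(m - 1)` to the right-hand side.
-/

open Real

lemma one_add_mul_add_choose_two_mul_sq_le_pow {a : ℝ} (ha : 0 ≤ a) (m : ℕ) :
    1 + m * a + m.choose 2 * a ^ 2 ≤ (1 + a) ^ m := by
  induction m with
  | zero => simp
  | succ k ih =>
    rw [pow_succ (1 + a), Nat.choose_succ_succ' k 1, Nat.choose_one_right]
    push_cast
    nlinarith [mul_le_mul_of_nonneg_right ih (by linarith : (0 : ℝ) ≤ 1 + a),
      mul_nonneg (Nat.cast_nonneg (α := ℝ) (k.choose 2)) (pow_nonneg ha 3)]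

lemma exp_sqrt_sub_div_mul_le {m t : ℝ} (hm : 0 < m) (ht : 0 < t) :
    exp ((√(m ^ 2 + t ^ 2) - t) / m) * (t + m / 4) ≤ m + √(m ^ 2 + t ^ 2) := by
  set r := √(m ^ 2 + t ^ 2)
  have hr2 : r ^ 2 = m ^ 2 + t ^ 2 := sq_sqrt (by positivity)
  have hr : 0 ≤ r := sqrt_nonneg _
  have hmr : m ≤ r := by nlinarith
  have hrmt : r < m + t := by nlinarith
  rcases le_or_gt r (3 * t) with h | h
  · have hexp : exp ((r - t) / m) ≤ m / (m + t - r) := by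
      have := exp_bound_div_one_sub_of_interval (x := (r - t) / m)
        (div_nonneg (by nlinarith) hm.le) (by rw [div_lt_one hm]; linarith)
      rwa [one_sub_div hm.ne', one_div_div, sub_sub_eq_add_sub] at this
    calc exp ((r - t) / m) * (t + m / 4) ≤ m / (m + t - r) * (t + m / 4) := by gcongr
      _ ≤ m + r := by
        rw [div_mul_eq_mul_div, div_le_iff₀ (by linarith)]
        nlinarith
  · have hexp : exp ((r - t) / m) ≤ 3 := by
      refine (exp_le_exp.mpr ?_).trans exp_one_lt_three.le
      rw [div_le_one hm]; linarith
    have htm : t < 0.36 * m := by nlinarith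
    calc exp ((r - t) / m) * (t + m / 4) ≤ 3 * (t + m / 4) := by gcongr
      _ ≤ m + r := by linarith

lemma exp_neg_add_sqrt_mul_pow_le {m : ℕ} (hm : 0 < m) {t : ℝ} (ht : 0 < t) :
    exp (-t + √(m ^ 2 + t ^ 2)) * (t / (m + √(m ^ 2 + t ^ 2))) ^ m ≤
      ((1 + m / (4 * t)) ^ m)⁻¹ := by
  have hm' : (0 : ℝ) < m := Nat.cast_pos.mpr hm
  set r := √(m ^ 2 + t ^ 2)
  have hfactor : exp ((r - t) / m) * (t / (m + r)) ≤ (1 + m / (4 * t))⁻¹ := by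
    have := exp_sqrt_sub_div_mul_le hm' ht
    rw [show (1 + m / (4 * t))⁻¹ = t / (t + m / 4) by field_simp, mul_div_assoc',
      div_le_div_iff₀ (by positivity) (by positivity)]
    nlinarith
  calc exp (-t + r) * (t / (m + r)) ^ m = (exp ((r - t) / m) * (t / (m + r))) ^ m := by
        rw [mul_pow, ← exp_nat_mul, mul_div_cancel₀ _ hm'.ne', neg_add_eq_sub]
    _ ≤ ((1 + m / (4 * t))⁻¹) ^ m := by gcongr
    _ = ((1 + m / (4 * t)) ^ m)⁻¹ := inv_pow _ _

lemma cube_le_mul_one_add_div_pow {m : ℕ} {t Q : ℝ} (ht : 0 < t) (hQ : 1 ≤ Q)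
    (htQ : t ≤ Q ^ 2) : (m : ℝ) ^ 3 ≤ 32 * (t * Q) * (1 + m / (4 * t)) ^ m := by
  set a := (m : ℝ) / (4 * t)
  have ha : 0 ≤ a := by positivity
  have hta : t * a = m / 4 := by simp only [a]; field_simp
  rcases le_total ((m : ℝ) ^ 2) t with h | h
  · have hcube : (m : ℝ) ^ 3 ≤ t * Q := by
      refine (pow_le_pow_iff_left₀ (by positivity) (by positivity) two_ne_zero).mp ?_
      calc ((m : ℝ) ^ 3) ^ 2 = (m ^ 2) ^ 3 := by ring
        _ ≤ t ^ 3 := by gcongr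
        _ ≤ (t * Q) ^ 2 := by nlinarith [sq_nonneg t]
    calc (m : ℝ) ^ 3 ≤ 32 * (t * Q) * 1 := by nlinarith [mul_pos ht (by linarith : (0 : ℝ) < Q)]
      _ ≤ 32 * (t * Q) * (1 + a) ^ m := by gcongr; exact one_le_pow₀ (by linarith)
  · have htm : t ≤ Q * m := by
      refine (pow_le_pow_iff_left₀ ht.le (by positivity) two_ne_zero).mp ?_
      rw [mul_pow, sq t]
      exact mul_le_mul htQ h ht.le (by positivity)
    have hQma : (m : ℝ) / 4 ≤ Q * m * a := hta ▸ mul_le_mul_of_nonneg_right htm ha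
    set c : ℝ := (m.choose 2 : ℝ)
    have hc : c = m * (m - 1) / 2 := Nat.cast_choose_two ℝ m
    calc (m : ℝ) ^ 3 = m ^ 2 + 2 * c * m := by rw [hc]; ring
      _ ≤ 8 * Q * m ^ 2 + 2 * c * (4 * (Q * m * a)) := by gcongr <;> nlinarith
      _ = 32 * (t * Q) * (m * a + c * a ^ 2) := by
        linear_combination (-32 * Q * m - 32 * Q * c * a) * hta
      _ ≤ 32 * (t * Q) * (1 + a) ^ m := by
        have := one_add_mul_add_choose_two_mul_sq_le_pow ha m
        gcongr; linarith

/-- There is `C > 0` such that for all `n ∈ ℕ` and `t > 0`,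
`s_n(t) ≤ C/(n+1)²`, where
`s_n(t) = (n+1) e^{-t+√((n+1)²+t²)} (t/(n+1+√((n+1)²+t²)))^{n+1} / (t (1+(n+1)²+t²)^{1/4})`. -/
theorem sn_sup_bound :
    ∃ C : ℝ, 0 < C ∧ ∀ (n : ℕ) (t : ℝ), 0 < t →
      ((n : ℝ) + 1) * Real.exp (-t + Real.sqrt (((n : ℝ) + 1) ^ 2 + t ^ 2)) *
          (t / ((n : ℝ) + 1 + Real.sqrt (((n : ℝ) + 1) ^ 2 + t ^ 2))) ^ (n + 1) /
          (t * (1 + ((n : ℝ) + 1) ^ 2 + t ^ 2) ^ ((1 : ℝ) / 4))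
        ≤ C / ((n : ℝ) + 1) ^ 2 := by
  refine ⟨32, by norm_num, fun n t ht => ?_⟩
  set Q := (1 + ((n : ℝ) + 1) ^ 2 + t ^ 2) ^ ((1 : ℝ) / 4)
  have hQ4 : Q ^ 4 = 1 + ((n : ℝ) + 1) ^ 2 + t ^ 2 := by
    simpa [Q] using
      rpow_inv_natCast_pow (n := 4) (by positivity : 0 ≤ 1 + ((n : ℝ) + 1) ^ 2 + t ^ 2) four_ne_zero
  have hQ : 1 ≤ Q := one_le_rpow (by nlinarith) (by norm_num)
  have htQ : t ≤ Q ^ 2 :=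
    (pow_le_pow_iff_left₀ ht.le (by positivity) two_ne_zero).mp (by nlinarith)
  have hpow := exp_neg_add_sqrt_mul_pow_le n.succ_pos ht
  have hcube := cube_le_mul_one_add_div_pow (m := n + 1) ht hQ htQ
  push_cast at hpow hcube
  rw [div_le_div_iff₀ (by positivity) (by positivity)]
  calc ((n : ℝ) + 1) * exp (-t + √(((n : ℝ) + 1) ^ 2 + t ^ 2)) *
        (t / ((n : ℝ) + 1 + √(((n : ℝ) + 1) ^ 2 + t ^ 2))) ^ (n + 1) * ((n : ℝ) + 1) ^ 2
      = ((n : ℝ) + 1) ^ 3 * (exp (-t + √(((n : ℝ) + 1) ^ 2 + t ^ 2)) *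
        (t / ((n : ℝ) + 1 + √(((n : ℝ) + 1) ^ 2 + t ^ 2))) ^ (n + 1)) := by ring
    _ ≤ ((n : ℝ) + 1) ^ 3 * ((1 + ((n : ℝ) + 1) / (4 * t)) ^ (n + 1))⁻¹ := by gcongr
    _ ≤ 32 * (t * Q) := by
      rw [← div_eq_mul_inv, div_le_iff₀ (by positivity)]
      exact hcube
end

section
/- There exists a constant C > 0 such that for all natural numbers n and all t > 0, (n/t)·s_n(t) ≤ C/(n+1)³, where s_n is as defined. -/
/-!
Write `m = n + 1`, `r = √(m² + t²)` and `q = t / (m + r)`. The Padé bound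
`log x ≥ 2 (x - 1) / (x + 1)` gives `m log (1 / q) ≥ 2 (r - t)`, so spending all but two factors
of `q ^ m` against `e ^ (r - t)` leaves `e ^ (r - t) q ^ m ≤ e ^ 4 e ^ (t - r) q ^ 2`.
The factor `q ^ 2 ≤ t ^ 2 / (m + r) ^ 2` absorbs the `t ^ 2` of the denominator, and since
`r - t = m ^ 2 / (r + t)`, the factor `e ^ (t - r)` is a Gaussian in `m` at scale `√r`, whence
`m ^ 5 e ^ (t - r) ≲ (m + r) ^ 2 √r ≤ (m + r) ^ 2 (1 + m ^ 2 + t ^ 2) ^ (1 / 4)`.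
-/

open Real

lemma two_mul_div_add_two_le_log_one_add {a : ℝ} (ha : 0 ≤ a) :
    2 * a / (a + 2) ≤ log (1 + a) := by
  simpa [mul_div_assoc] using le_hasSum (hasSum_log_one_add ha) 0 fun k _ => by positivity

lemma two_mul_sqrt_sub_le_mul_log {m t : ℝ} (hm : 0 ≤ m) (ht : 0 < t) :
    2 * (√(m ^ 2 + t ^ 2) - t) ≤ m * log ((m + √(m ^ 2 + t ^ 2)) / t) := by
  set r := √(m ^ 2 + t ^ 2)
  have hr2 : r ^ 2 = m ^ 2 + t ^ 2 := sq_sqrt (by positivity)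
  have htr : t ≤ r := le_sqrt_of_sq_le (by nlinarith)
  have hpade := two_mul_div_add_two_le_log_one_add (a := (m + r - t) / t)
    (div_nonneg (by linarith) ht.le)
  have hx : 1 + (m + r - t) / t = (m + r) / t := by field_simp; ring
  have hlhs :
      2 * ((m + r - t) / t) / ((m + r - t) / t + 2) = 2 * (m + r - t) / (m + r + t) := by
    field_simp; ring
  rw [hx, hlhs] at hpade
  calc 2 * (r - t) = m * (2 * (m + r - t) / (m + r + t)) := by
        rw [mul_div_assoc', eq_div_iff (by positivity)]
        linear_combination 2 * hr2
    _ ≤ m * log ((m + r) / t) := mul_le_mul_of_nonneg_left hpade hm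

lemma exp_sub_mul_rpow_le {m t : ℝ} (hm : 2 ≤ m) (ht : 0 < t) :
    exp (-t + √(m ^ 2 + t ^ 2)) * (t / (m + √(m ^ 2 + t ^ 2))) ^ m ≤
      exp (4 + t - √(m ^ 2 + t ^ 2)) * (t / (m + √(m ^ 2 + t ^ 2))) ^ 2 := by
  set r := √(m ^ 2 + t ^ 2)
  have hlog := two_mul_sqrt_sub_le_mul_log (m := m) (by linarith) ht
  have hrm : r ≤ m + t := sqrt_le_iff.mpr ⟨by linarith, by nlinarith⟩
  have hq : 0 < t / (m + r) := by positivity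
  have hlogq : log (t / (m + r)) = -log ((m + r) / t) := by rw [← inv_div, log_inv]
  rw [← rpow_natCast, rpow_def_of_pos hq, rpow_def_of_pos hq, ← exp_add, ← exp_add,
    exp_le_exp, hlogq, Nat.cast_ofNat]
  -- `m ((m - 2) L - 2 (r - t) + 4) ≥ 4 (m - (r - t)) ≥ 0` where `L = log ((m + r) / t)`
  nlinarith [mul_le_mul_of_nonneg_left hlog (by linarith : (0 : ℝ) ≤ m - 2)]

lemma pow_mul_exp_neg_le_factorial {x : ℝ} (hx : 0 ≤ x) (n : ℕ) :
    x ^ n * exp (-x) ≤ n.factorial := by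
  rw [exp_neg, ← div_eq_mul_inv, div_le_iff₀ (exp_pos x), mul_comm,
    ← div_le_iff₀ (by positivity)]
  exact pow_div_factorial_le_exp x hx n

lemma pow_five_mul_exp_sub_le {m t : ℝ} (hm : 0 ≤ m) (ht : 0 ≤ t) :
    m ^ 5 * exp (t - √(m ^ 2 + t ^ 2)) ≤
      11 * (m + √(m ^ 2 + t ^ 2)) ^ 2 * (1 + m ^ 2 + t ^ 2) ^ ((1 : ℝ) / 4) := by
  have hB4 : ((1 + m ^ 2 + t ^ 2) ^ ((1 : ℝ) / 4)) ^ 4 = 1 + m ^ 2 + t ^ 2 := by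
    rw [show (1 : ℝ) / 4 = ((4 : ℕ) : ℝ)⁻¹ by norm_num]
    exact rpow_inv_natCast_pow (by positivity) (by norm_num)
  set r := √(m ^ 2 + t ^ 2)
  set B := (1 + m ^ 2 + t ^ 2) ^ ((1 : ℝ) / 4)
  have hr2 : r ^ 2 = m ^ 2 + t ^ 2 := sq_sqrt (by positivity)
  have htr : t ≤ r := le_sqrt_of_sq_le (by nlinarith)
  have hr0 : 0 ≤ r := ht.trans htr
  have hrB : r ≤ B ^ 2 := (pow_le_pow_iff_left₀ hr0 (by positivity) two_ne_zero).mp <| by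
    rw [← pow_mul]; norm_num; linarith
  set y := r - t
  have hy : 0 ≤ y := by linarith
  have hmy : m ^ 2 = y * (r + t) := by linear_combination -hr2
  refine (pow_le_pow_iff_left₀ (by positivity) (by positivity) two_ne_zero).mp ?_
  calc (m ^ 5 * exp (t - r)) ^ 2 = (y * (r + t)) ^ 5 * exp (-(2 * y)) := by
        rw [← hmy, mul_pow, ← exp_nat_mul]; simp only [y]; ring_nf
    _ ≤ (y * (2 * r)) ^ 5 * exp (-(2 * y)) := by gcongr; linarith
    _ = (2 * y) ^ 5 * exp (-(2 * y)) * r ^ 5 := by ring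
    _ ≤ (5).factorial * r ^ 5 := by gcongr; exact pow_mul_exp_neg_le_factorial (by positivity) 5
    _ ≤ 121 * ((m + r) ^ 4 * B ^ 2) := by
        rw [show r ^ 5 = r ^ 4 * r by ring]
        gcongr
        · norm_num [Nat.factorial]
        · linarith
    _ = (11 * (m + r) ^ 2 * B) ^ 2 := by ring

lemma pow_five_mul_exp_sub_mul_rpow_le {m t : ℝ} (hm : 2 ≤ m) (ht : 0 < t) :
    m ^ 5 * (exp (-t + √(m ^ 2 + t ^ 2)) * (t / (m + √(m ^ 2 + t ^ 2))) ^ m) ≤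
      11 * exp 4 * (t ^ 2 * (1 + m ^ 2 + t ^ 2) ^ ((1 : ℝ) / 4)) := by
  set r := √(m ^ 2 + t ^ 2)
  set B := (1 + m ^ 2 + t ^ 2) ^ ((1 : ℝ) / 4)
  have hmr : 0 < m + r := by positivity
  calc m ^ 5 * (exp (-t + r) * (t / (m + r)) ^ m)
      ≤ m ^ 5 * (exp (4 + t - r) * (t / (m + r)) ^ 2) := by
        gcongr m ^ 5 * ?_
        exact exp_sub_mul_rpow_le hm ht
    _ = exp 4 * (m ^ 5 * exp (t - r)) * (t ^ 2 / (m + r) ^ 2) := by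
        rw [div_pow, add_sub_assoc, exp_add]; ring
    _ ≤ exp 4 * (11 * (m + r) ^ 2 * B) * (t ^ 2 / (m + r) ^ 2) := by
        gcongr exp 4 * ?_ * _
        exact pow_five_mul_exp_sub_le (by linarith) ht.le
    _ = 11 * exp 4 * (t ^ 2 * B) := by field_simp

/-- There is `C > 0` such that for all `n ∈ ℕ` and `t > 0`,
`(n/t)·s_n(t) ≤ C/(n+1)³`, where
`s_n(t) = (n+1) e^{-t+√((n+1)²+t²)} (t/(n+1+√((n+1)²+t²)))^{n+1} / (t (1+(n+1)²+t²)^{1/4})`. -/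
theorem sn_derivative_type_bound :
    ∃ C : ℝ, 0 < C ∧ ∀ (n : ℕ) (t : ℝ), 0 < t →
      ((n : ℝ) / t) *
          (((n : ℝ) + 1) * Real.exp (-t + Real.sqrt (((n : ℝ) + 1) ^ 2 + t ^ 2)) *
            (t / ((n : ℝ) + 1 + Real.sqrt (((n : ℝ) + 1) ^ 2 + t ^ 2))) ^ (n + 1) /
            (t * (1 + ((n : ℝ) + 1) ^ 2 + t ^ 2) ^ ((1 : ℝ) / 4)))
        ≤ C / ((n : ℝ) + 1) ^ 3 := by
  refine ⟨11 * exp 4, by positivity, fun n t ht => ?_⟩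
  rcases Nat.eq_zero_or_pos n with rfl | hn
  · simp only [CharP.cast_eq_zero, zero_div, zero_mul]
    positivity
  have hm : (2 : ℝ) ≤ n + 1 := by norm_cast; omega
  have key := pow_five_mul_exp_sub_mul_rpow_le hm ht
  rw [← rpow_natCast _ (n + 1), Nat.cast_add_one]
  set m : ℝ := n + 1
  set X := exp (-t + √(m ^ 2 + t ^ 2)) * (t / (m + √(m ^ 2 + t ^ 2))) ^ m
  set B := (1 + m ^ 2 + t ^ 2) ^ ((1 : ℝ) / 4)
  rw [mul_assoc, le_div_iff₀ (by positivity)]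
  calc n / t * (m * X / (t * B)) * m ^ 3 = n * m ^ 4 * X / (t ^ 2 * B) := by field_simp
    _ ≤ m * m ^ 4 * X / (t ^ 2 * B) := by gcongr; linarith
    _ ≤ 11 * exp 4 := by rw [div_le_iff₀ (by positivity)]; linarith
end

section
/- Let T be the homogeneous tree of degree q+1 with q ≥ 2, μ(y) = q^{ℓ(y)}, and for fixed vertex x and integer n ≥ 1 let f_{x,n}(y) = q^{−(ℓ(x)+d(x,y))/2}/(d(x,y)+n)². Then for every integer m ≥ 1, Σ_{y ∈ S_m(x)} q^{ℓ(y)/2} f_{x,n}(y) = (1/(m+n)²)·(2 + (m−1)(q−1)/q). -/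
/-!
Split `S_m(x)` according to the number `i` of steps from `x` up to the confluent of `x` and `y`.
The piece `i = m` is the single vertex `p^m x`; the piece `i = 0` consists of the `q^m`
descendants of `x` at depth `m`; for `0 < i < m` it consists of the descendants at depth
`m - i - 1` of the `q - 1` sons of `p^i x` other than `p^(i-1) x`, so it has `(q - 1) q^(m-i-1)`
points. On the `i`-th piece `ℓ y = ℓ x + 2i - m`, so every summand there equals
`q^(i-m) / (m+n)²`, and the pieces contribute `1`, `1` and `(q - 1)/q` each, up to that factor.
-/

open Finset Function

section Descendants

variable {V : Type*} [DecidableEq V] {p : V → V} {sons : V → Finset V}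

def descendants (sons : V → Finset V) : ℕ → V → Finset V
  | 0, v => {v}
  | k + 1, v => (sons v).biUnion (descendants sons k)

theorem mem_descendants (hsons : ∀ x y, y ∈ sons x ↔ p y = x) (k : ℕ) (v y : V) :
    y ∈ descendants sons k v ↔ p^[k] y = v := by
  induction k generalizing v with
  | zero => simp [descendants]
  | succ k ih => simp [descendants, ih, hsons, iterate_succ_apply']

theorem mem_biUnion_descendants (hsons : ∀ x y, y ∈ sons x ↔ p y = x) (s : Finset V)
    (k : ℕ) (y : V) : y ∈ s.biUnion (descendants sons k) ↔ p^[k] y ∈ s := by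
  simp [mem_descendants hsons]

theorem pairwiseDisjoint_descendants (hsons : ∀ x y, y ∈ sons x ↔ p y = x) (s : Set V)
    (k : ℕ) : s.PairwiseDisjoint (descendants sons k) := fun v _ w _ hvw =>
  disjoint_left.2 fun y hv hw => hvw <|
    ((mem_descendants hsons k v y).1 hv).symm.trans ((mem_descendants hsons k w y).1 hw)

theorem card_descendants {q : ℕ} (hsons : ∀ x y, y ∈ sons x ↔ p y = x)
    (hcard : ∀ x, #(sons x) = q) (k : ℕ) (v : V) : #(descendants sons k v) = q ^ k := by
  induction k generalizing v with
  | zero => simp [descendants]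
  | succ k ih =>
    rw [descendants, card_biUnion (pairwiseDisjoint_descendants hsons _ k)]
    simp [ih, hcard, pow_succ, mul_comm]

theorem card_biUnion_descendants {q : ℕ} (hsons : ∀ x y, y ∈ sons x ↔ p y = x)
    (hcard : ∀ x, #(sons x) = q) (s : Finset V) (k : ℕ) :
    #(s.biUnion (descendants sons k)) = #s * q ^ k := by
  simp [card_biUnion (pairwiseDisjoint_descendants hsons _ k), card_descendants hsons hcard]

end Descendants

section Distance

variable {V : Type*} {p : V → V} {ℓ : V → ℤ} {d : V → V → ℕ}

theorem level_iterate (hlevel : ∀ y, ℓ (p y) = ℓ y + 1) (k : ℕ) (y : V) :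
    ℓ (p^[k] y) = ℓ y + k := by
  induction k with
  | zero => simp
  | succ k ih => rw [iterate_succ_apply', hlevel, ih]; push_cast; ring

theorem level_add_eq_of_iterate_eq (hlevel : ∀ y, ℓ (p y) = ℓ y + 1) {x y : V} {i j : ℕ}
    (h : p^[i] x = p^[j] y) : ℓ x + i = ℓ y + j := by
  rw [← level_iterate hlevel, h, level_iterate hlevel]

theorem add_eq_add_of_iterate_eq (hlevel : ∀ y, ℓ (p y) = ℓ y + 1) {x y : V} {i j i' j' : ℕ}
    (h : p^[i] x = p^[j] y) (h' : p^[i'] x = p^[j'] y) : i + j' = i' + j := by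
  have := level_add_eq_of_iterate_eq hlevel h
  have := level_add_eq_of_iterate_eq hlevel h'
  omega

theorem iterate_add_eq_of_iterate_eq {x y : V} {i j : ℕ} (h : p^[i] x = p^[j] y) (k : ℕ) :
    p^[k + i] x = p^[k + j] y := by
  rw [iterate_add_apply, iterate_add_apply, h]

theorem dist_le_of_iterate_eq
    (hd : ∀ y x : V, d y x = sInf {n : ℕ | ∃ i j : ℕ, i + j = n ∧ p^[i] y = p^[j] x})
    {x y : V} {i j : ℕ} (h : p^[i] x = p^[j] y) : d x y ≤ i + j := by
  rw [hd]
  exact Nat.sInf_le ⟨i, j, rfl, h⟩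

theorem exists_iterate_eq_of_dist
    (hd : ∀ y x : V, d y x = sInf {n : ℕ | ∃ i j : ℕ, i + j = n ∧ p^[i] y = p^[j] x})
    {x y : V} {i j : ℕ} (h : p^[i] x = p^[j] y) :
    ∃ a b, a + b = d x y ∧ p^[a] x = p^[b] y := by
  rw [hd]
  exact Nat.sInf_mem (s := {n | ∃ a b, a + b = n ∧ p^[a] x = p^[b] y}) ⟨i + j, i, j, rfl, h⟩

theorem dist_eq_iff_of_iterate_eq (hlevel : ∀ y, ℓ (p y) = ℓ y + 1)
    (hd : ∀ y x : V, d y x = sInf {n : ℕ | ∃ i j : ℕ, i + j = n ∧ p^[i] y = p^[j] x})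
    {x y : V} {i j : ℕ} (h : p^[i] x = p^[j] y) :
    d x y = i + j ↔ i = 0 ∨ j = 0 ∨ p^[i - 1] x ≠ p^[j - 1] y := by
  constructor
  · intro hxy
    by_contra! hmin
    have := dist_le_of_iterate_eq hd hmin.2.2
    omega
  · intro hmin
    obtain ⟨a, b, hab, hmeet⟩ := exists_iterate_eq_of_dist hd h
    have := dist_le_of_iterate_eq hd h
    have := add_eq_add_of_iterate_eq hlevel hmeet h
    by_contra hlt
    rcases hmin with hi | hj | hne
    · omega
    · omega
    -- a shorter meeting point `(a, b)` propagates up to `(i - 1, j - 1)`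
    have := iterate_add_eq_of_iterate_eq hmeet (i - 1 - a)
    rw [show i - 1 - a + a = i - 1 by omega, show i - 1 - a + b = j - 1 by omega] at this
    exact hne this

end Distance

section Sphere

variable {V : Type*} [DecidableEq V] {p : V → V} {ℓ : V → ℤ} {d : V → V → ℕ}
  {sons : V → Finset V} {sphere : ℕ → V → Finset V}

/-- The points of `S_m(x)` whose geodesic from `x` climbs `i` steps before descending. -/
def spherePiece (sphere : ℕ → V → Finset V) (p : V → V) (m : ℕ) (x : V) (i : ℕ) :
    Finset V :=
  {y ∈ sphere m x | p^[i] x = p^[m - i] y}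

theorem sphere_eq_biUnion_spherePiece
    (hd : ∀ y x : V, d y x = sInf {n : ℕ | ∃ i j : ℕ, i + j = n ∧ p^[i] y = p^[j] x})
    (hconf : ∀ y x : V, ∃ i j : ℕ, p^[i] y = p^[j] x)
    (hsphere : ∀ (m : ℕ) (x y : V), y ∈ sphere m x ↔ d x y = m) (m : ℕ) (x : V) :
    sphere m x = (range (m + 1)).biUnion (spherePiece sphere p m x) := by
  ext y
  simp only [mem_biUnion, mem_range, spherePiece, mem_filter]
  refine ⟨fun hy => ?_, fun ⟨_, _, hy, _⟩ => hy⟩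
  obtain ⟨i, j, h⟩ := hconf x y
  obtain ⟨a, b, hab, hmeet⟩ := exists_iterate_eq_of_dist hd h
  rw [(hsphere m x y).1 hy] at hab
  exact ⟨a, by omega, hy, by rwa [show m - a = b by omega]⟩

theorem pairwiseDisjoint_spherePiece (hlevel : ∀ y, ℓ (p y) = ℓ y + 1) (m : ℕ) (x : V) :
    (range (m + 1) : Set ℕ).PairwiseDisjoint (spherePiece sphere p m x) := by
  intro i hi j hj hij
  simp only [coe_range, Set.mem_Iio] at hi hj
  refine disjoint_left.2 fun y hyi hyj => hij ?_
  have := add_eq_add_of_iterate_eq hlevel (mem_filter.1 hyi).2 (mem_filter.1 hyj).2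
  omega

theorem mem_spherePiece (hlevel : ∀ y, ℓ (p y) = ℓ y + 1)
    (hd : ∀ y x : V, d y x = sInf {n : ℕ | ∃ i j : ℕ, i + j = n ∧ p^[i] y = p^[j] x})
    (hsphere : ∀ (m : ℕ) (x y : V), y ∈ sphere m x ↔ d x y = m) {m i : ℕ} (hi : i ≤ m)
    {x y : V} :
    y ∈ spherePiece sphere p m x i ↔
      p^[i] x = p^[m - i] y ∧ (i = 0 ∨ i = m ∨ p^[i - 1] x ≠ p^[m - i - 1] y) := by
  rw [spherePiece, mem_filter, hsphere, and_comm]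
  refine and_congr_right fun h => ?_
  rw [← Nat.add_sub_cancel' hi, dist_eq_iff_of_iterate_eq hlevel hd h, Nat.add_sub_cancel' hi,
    show m - i = 0 ↔ i = m by omega]

theorem level_of_mem_spherePiece (hlevel : ∀ y, ℓ (p y) = ℓ y + 1) {m i : ℕ} (hi : i ≤ m)
    {x y : V} (hy : y ∈ spherePiece sphere p m x i) : ℓ x + m = ℓ y + 2 * (m - i : ℕ) := by
  have := level_add_eq_of_iterate_eq hlevel (mem_filter.1 hy).2
  omega

theorem spherePiece_zero (hlevel : ∀ y, ℓ (p y) = ℓ y + 1)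
    (hd : ∀ y x : V, d y x = sInf {n : ℕ | ∃ i j : ℕ, i + j = n ∧ p^[i] y = p^[j] x})
    (hsphere : ∀ (m : ℕ) (x y : V), y ∈ sphere m x ↔ d x y = m)
    (hsons : ∀ x y, y ∈ sons x ↔ p y = x) (m : ℕ) (x : V) :
    spherePiece sphere p m x 0 = descendants sons m x := by
  ext y
  rw [mem_spherePiece hlevel hd hsphere m.zero_le, mem_descendants hsons]
  simp [eq_comm]

theorem spherePiece_self (hlevel : ∀ y, ℓ (p y) = ℓ y + 1)
    (hd : ∀ y x : V, d y x = sInf {n : ℕ | ∃ i j : ℕ, i + j = n ∧ p^[i] y = p^[j] x})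
    (hsphere : ∀ (m : ℕ) (x y : V), y ∈ sphere m x ↔ d x y = m) (m : ℕ) (x : V) :
    spherePiece sphere p m x m = {p^[m] x} := by
  ext y
  rw [mem_spherePiece hlevel hd hsphere le_rfl]
  simp [eq_comm]

theorem spherePiece_eq_biUnion_erase (hlevel : ∀ y, ℓ (p y) = ℓ y + 1)
    (hd : ∀ y x : V, d y x = sInf {n : ℕ | ∃ i j : ℕ, i + j = n ∧ p^[i] y = p^[j] x})
    (hsphere : ∀ (m : ℕ) (x y : V), y ∈ sphere m x ↔ d x y = m)
    (hsons : ∀ x y, y ∈ sons x ↔ p y = x) {m i : ℕ} (hi₀ : 0 < i) (him : i < m)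
    (x : V) :
    spherePiece sphere p m x i =
      ((sons (p^[i] x)).erase (p^[i - 1] x)).biUnion (descendants sons (m - i - 1)) := by
  ext y
  rw [mem_spherePiece hlevel hd hsphere him.le, mem_biUnion_descendants hsons, mem_erase,
    hsons, ← iterate_succ_apply' p, show (m - i - 1).succ = m - i by omega]
  simp only [hi₀.ne', him.ne, false_or]
  tauto

theorem card_spherePiece_of_pos_of_lt {q : ℕ} (hlevel : ∀ y, ℓ (p y) = ℓ y + 1)
    (hd : ∀ y x : V, d y x = sInf {n : ℕ | ∃ i j : ℕ, i + j = n ∧ p^[i] y = p^[j] x})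
    (hsphere : ∀ (m : ℕ) (x y : V), y ∈ sphere m x ↔ d x y = m)
    (hsons : ∀ x y, y ∈ sons x ↔ p y = x) (hcard : ∀ x, #(sons x) = q) {m i : ℕ}
    (hi₀ : 0 < i) (him : i < m) (x : V) :
    #(spherePiece sphere p m x i) = (q - 1) * q ^ (m - i - 1) := by
  have hmem : p^[i - 1] x ∈ sons (p^[i] x) := by
    rw [hsons, ← iterate_succ_apply' p, show (i - 1).succ = i by omega]
  rw [spherePiece_eq_biUnion_erase hlevel hd hsphere hsons hi₀ him,
    card_biUnion_descendants hsons hcard, card_erase_of_mem hmem, hcard]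

theorem sum_card_spherePiece_mul_inv_pow {q : ℕ} (hq : 0 < q)
    (hlevel : ∀ y, ℓ (p y) = ℓ y + 1)
    (hd : ∀ y x : V, d y x = sInf {n : ℕ | ∃ i j : ℕ, i + j = n ∧ p^[i] y = p^[j] x})
    (hsphere : ∀ (m : ℕ) (x y : V), y ∈ sphere m x ↔ d x y = m)
    (hsons : ∀ x y, y ∈ sons x ↔ p y = x) (hcard : ∀ x, #(sons x) = q) {m : ℕ}
    (hm : 1 ≤ m) (x : V) :
    ∑ i ∈ range (m + 1), (#(spherePiece sphere p m x i) : ℝ) * ((q : ℝ) ^ (m - i))⁻¹ =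
      2 + ((m : ℝ) - 1) * ((q : ℝ) - 1) / q := by
  obtain ⟨k, rfl⟩ := Nat.exists_eq_add_of_le' hm
  have hmid : ∀ i ∈ range k, (#(spherePiece sphere p (k + 1) x (i + 1)) : ℝ) *
      ((q : ℝ) ^ (k + 1 - (i + 1)))⁻¹ = (q - 1) / q := by
    intro i hi
    obtain ⟨j, rfl⟩ := Nat.exists_eq_add_of_lt (mem_range.1 hi)
    rw [card_spherePiece_of_pos_of_lt hlevel hd hsphere hsons hcard i.add_one_pos (by omega),
      show i + j + 1 + 1 - (i + 1) = j + 1 by omega, show j + 1 - 1 = j from rfl]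
    push_cast [Nat.cast_sub hq]
    field_simp
    ring
  rw [sum_range_succ, sum_range_succ', sum_congr rfl hmid, spherePiece_self hlevel hd hsphere,
    spherePiece_zero hlevel hd hsphere hsons, card_descendants hsons hcard]
  simp only [sum_const, card_range, nsmul_eq_mul, Nat.cast_pow, tsub_zero, iterate_succ,
    comp_apply, card_singleton, Nat.cast_one, tsub_self, pow_zero, inv_one, mul_one, Nat.cast_add,
    add_sub_cancel_right]
  field_simp
  ring

end Sphere

theorem rpow_half_mul_rpow_neg_half {b : ℝ} (hb : 0 < b) {a c : ℝ} {k : ℕ}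
    (h : c = a + 2 * k) :
    b ^ (a / 2) * b ^ (-(c / 2)) = (b ^ k)⁻¹ := by
  rw [← Real.rpow_add hb, h, ← Real.rpow_natCast, ← Real.rpow_neg hb.le]
  ring_nf

theorem sphere_integration_lemma_general
    (q : ℕ) (hq : 2 ≤ q) (V : Type*)
    (p : V → V) (ℓ : V → ℤ)
    (hlevel : ∀ y : V, ℓ (p y) = ℓ y + 1)
    (sons : V → Finset V)
    (hsons : ∀ x y : V, y ∈ sons x ↔ p y = x)
    (hcard : ∀ x : V, (sons x).card = q)
    (hconf : ∀ y x : V, ∃ i j : ℕ, p^[i] y = p^[j] x)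
    (d : V → V → ℕ)
    (hd : ∀ y x : V, d y x = sInf {n : ℕ | ∃ i j : ℕ, i + j = n ∧ p^[i] y = p^[j] x})
    (sphere : ℕ → V → Finset V)
    (hsphere : ∀ (m : ℕ) (x y : V), y ∈ sphere m x ↔ d x y = m)
    (x : V) (n : ℕ) (m : ℕ) (hm : 1 ≤ m) :
    ∑ y ∈ sphere m x,
        (q : ℝ) ^ ((ℓ y : ℝ) / 2) *
          ((q : ℝ) ^ (-(((ℓ x : ℝ) + (d x y : ℝ)) / 2)) /
            ((d x y : ℝ) + (n : ℝ)) ^ 2)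
      = 1 / ((m : ℝ) + (n : ℝ)) ^ 2 *
          (2 + ((m : ℝ) - 1) * ((q : ℝ) - 1) / (q : ℝ)) := by
  classical
  have hq₀ : (0 : ℝ) < q := by exact_mod_cast (by omega : 0 < q)
  have hterm : ∀ i ∈ range (m + 1), ∀ y ∈ spherePiece sphere p m x i,
      (q : ℝ) ^ ((ℓ y : ℝ) / 2) * ((q : ℝ) ^ (-(((ℓ x : ℝ) + (d x y : ℝ)) / 2)) /
        ((d x y : ℝ) + (n : ℝ)) ^ 2) = ((q : ℝ) ^ (m - i))⁻¹ / ((m : ℝ) + n) ^ 2 := by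
    intro i hi y hy
    rw [(hsphere _ _ _).1 (mem_filter.1 hy).1, ← mul_div_assoc,
      rpow_half_mul_rpow_neg_half hq₀]
    exact_mod_cast level_of_mem_spherePiece hlevel (Nat.lt_succ_iff.1 (mem_range.1 hi)) hy
  rw [sphere_eq_biUnion_spherePiece hd hconf hsphere,
    sum_biUnion (pairwiseDisjoint_spherePiece hlevel _ _),
    sum_congr rfl fun i hi => sum_congr rfl (hterm i hi)]
  simp only [sum_const, nsmul_eq_mul, ← mul_div_assoc, ← sum_div,
    sum_card_spherePiece_mul_inv_pow (by omega) hlevel hd hsphere hsons hcard hm]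
  ring

/-- On the homogeneous tree of degree `q+1` with `q ≥ 2` (axiomatized as in the
paper: predecessor map `p` with fibers of cardinality `q`, level function `ℓ`
with `ℓ (p y) = ℓ y + 1`, loop-freeness, confluents, graph distance `d` given by
`d y x = min {i + j : p^[i] y = p^[j] x}`, symmetric, and spheres
`S_m(x) = {y : d(x,y) = m}` given as finite sets), for
`f_{x,n}(y) = q^{−(ℓ(x)+d(x,y))/2}/(d(x,y)+n)²` with `n ≥ 1`, for every `m ≥ 1`:
`Σ_{y ∈ S_m(x)} q^{ℓ(y)/2} f_{x,n}(y) = (1/(m+n)²)(2 + (m−1)(q−1)/q)`. -/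
theorem sphere_integration_lemma
    (q : ℕ) (hq : 2 ≤ q) (V : Type*)
    (p : V → V) (ℓ : V → ℤ)
    (hlevel : ∀ y : V, ℓ (p y) = ℓ y + 1)
    (sons : V → Finset V)
    (hsons : ∀ x y : V, y ∈ sons x ↔ p y = x)
    (hcard : ∀ x : V, (sons x).card = q)
    (hnoloop : ∀ (y : V) (i j : ℕ), p^[i] y = p^[j] y → i = j)
    (hconf : ∀ y x : V, ∃ i j : ℕ, p^[i] y = p^[j] x)
    (d : V → V → ℕ)
    (hd : ∀ y x : V, d y x = sInf {n : ℕ | ∃ i j : ℕ, i + j = n ∧ p^[i] y = p^[j] x})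
    (hdsymm : ∀ a b : V, d a b = d b a)
    (sphere : ℕ → V → Finset V)
    (hsphere : ∀ (m : ℕ) (x y : V), y ∈ sphere m x ↔ d x y = m)
    (x : V) (n : ℕ) (hn : 1 ≤ n) (m : ℕ) (hm : 1 ≤ m) :
    ∑ y ∈ sphere m x,
        (q : ℝ) ^ ((ℓ y : ℝ) / 2) *
          ((q : ℝ) ^ (-(((ℓ x : ℝ) + (d x y : ℝ)) / 2)) /
            ((d x y : ℝ) + (n : ℝ)) ^ 2)
      = 1 / ((m : ℝ) + (n : ℝ)) ^ 2 *
          (2 + ((m : ℝ) - 1) * ((q : ℝ) - 1) / (q : ℝ)) :=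
  sphere_integration_lemma_general q hq V p ℓ hlevel sons hsons hcard hconf d hd sphere hsphere x n
    m hm
end
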